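/- Let m ≥ 2 be even and define f(n) = Σ_{S independent in Δ_n^m} (−1)^{|S|}. Then f(0) = −1, f(1) = 2, f(2) = −1, and f(n) = f(n−3) − f(n−2) − f(n−1) for every n ≥ 3. -/

import Mathlib

attribute [local instance] Classical.propDecidable

/-- The alternating sum `Σ_S (-1)^{|S|}` over all independent sets `S` of
vertices of `G` (including the empty set). -/
noncomputable def indepSum {V : Type} [Fintype V] (G : SimpleGraph V) : ℤ :=
  ∑ S ∈ Finset.univ.filter
      (fun S : Finset V => ∀ x ∈ S, ∀ y ∈ S, ¬ G.Adj x y),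
    (-1 : ℤ) ^ S.card

/-- Base relation for `Δ_n^m`: `Sum.inl 0 = a` and `Sum.inl 1 = b` are joined
by `m` internally disjoint paths with internal vertices `Sum.inr (Sum.inl (j, s))`
for `s : Fin (n+1)` (so each path has `n + 2` edges), and there are `n` extra
vertices `Sum.inr (Sum.inr t)` for `t : Fin n`, the vertex `t` (representing
`t + 1 ∈ {1, …, n}`) being adjacent to `(j, s)` for `s = t` and `s = t + 1`
(i.e. to the `(t+1)`-st and `(t+2)`-nd internal vertices of every path). -/
def deltaRel (m n : ℕ) :
    (Fin 2 ⊕ (Fin m × Fin (n + 1) ⊕ Fin n)) →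
    (Fin 2 ⊕ (Fin m × Fin (n + 1) ⊕ Fin n)) → Prop
  | Sum.inl i, Sum.inr (Sum.inl (_, s)) => (i = 0 ∧ (s : ℕ) = 0) ∨ (i = 1 ∧ (s : ℕ) = n)
  | Sum.inr (Sum.inl (j, s)), Sum.inr (Sum.inl (j', s')) => j = j' ∧ (s' : ℕ) = (s : ℕ) + 1
  | Sum.inr (Sum.inr t), Sum.inr (Sum.inl (_, s)) => (s : ℕ) = (t : ℕ) ∨ (s : ℕ) = (t : ℕ) + 1
  | _, _ => False

/-- The graph `Δ_n^m`. -/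
def deltaGraph (m n : ℕ) : SimpleGraph (Fin 2 ⊕ (Fin m × Fin (n + 1) ⊕ Fin n)) :=
  SimpleGraph.fromRel (deltaRel m n)

namespace Scratch

/-! ### indicator -/

noncomputable def χ (P : Prop) : ℤ := if P then 1 else 0

lemma χ_pos {P : Prop} (h : P) : χ P = 1 := if_pos h
lemma χ_neg {P : Prop} (h : ¬ P) : χ P = 0 := if_neg h
lemma χ_congr {P Q : Prop} (h : P ↔ Q) : χ P = χ Q := by
  by_cases hP : P
  · rw [χ_pos hP, χ_pos (h.1 hP)]
  · rw [χ_neg hP, χ_neg (fun hq => hP (h.2 hq))]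

lemma χ_prod {ι : Type} [Fintype ι] (p : ι → Prop) (f : ι → ℤ) :
    (∏ i, χ (p i) * f i) = χ (∀ i, p i) * ∏ i, f i := by
  by_cases h : ∀ i, p i
  · rw [χ_pos h, one_mul]
    exact Finset.prod_congr rfl fun i _ => by rw [χ_pos (h i), one_mul]
  · rw [χ_neg h, zero_mul]
    push_neg at h
    obtain ⟨i, hi⟩ := h
    exact Finset.prod_eq_zero (Finset.mem_univ i) (by rw [χ_neg hi, zero_mul])

def sgn (b : Bool) : ℤ := cond b (-1) 1

def wt {k : ℕ} (h : Fin k → Bool) : ℤ := ∏ t, sgn (h t)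

def colOK {k : ℕ} (x y : Bool) (h : Fin k → Bool) (A : Fin (k+1) → Bool) : Prop :=
  (x = true → A 0 = false) ∧ (y = true → A (Fin.last k) = false) ∧
  (∀ i : Fin k, ¬(A i.castSucc = true ∧ A i.succ = true)) ∧
  (∀ i : Fin k, h i = true → A i.castSucc = false ∧ A i.succ = false)

noncomputable def colSum {k : ℕ} (x y : Bool) (h : Fin k → Bool) : ℤ :=
  ∑ A : Fin (k+1) → Bool, χ (colOK x y h A) * ∏ s, sgn (A s)

def pcol : Bool → Bool → List Bool → ℤ
  | x, y, [] => cond (x || y) 1 0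
  | x, y, c :: cs => pcol c y cs + cond (x || c) 0 (-pcol true y cs)

/-! ### generalities on sums -/

lemma sum_succ_fn' {k : ℕ} {τ : Type} [Fintype τ] (F : (Fin (k+1) → τ) → ℤ) :
    ∑ A : Fin (k+1) → τ, F A = ∑ b : τ, ∑ A : Fin k → τ, F (Fin.cons b A) := by
  calc ∑ A : Fin (k+1) → τ, F A
      = ∑ p : τ × (Fin k → τ), F (Fin.cons p.1 p.2) :=
        (Fintype.sum_equiv (Fin.consEquiv fun _ => τ)
          (fun p => F (Fin.cons p.1 p.2)) F fun p => rfl).symm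
    _ = _ := Fintype.sum_prod_type _

lemma sum_pow_fn {τ : Type} [Fintype τ] (F : τ → ℤ) :
    ∀ m : ℕ, (∑ G : Fin m → τ, ∏ j, F (G j)) = (∑ A : τ, F A) ^ m := by
  intro m
  induction m with
  | zero => simp
  | succ m ih =>
    rw [sum_succ_fn' (fun G => ∏ j, F (G j))]
    have hpt : ∀ (b : τ) (A : Fin m → τ),
        (∏ j : Fin (m+1), F (Fin.cons (α := fun _ => τ) b A j)) = F b * ∏ j : Fin m, F (A j) := by
      intro b A
      rw [Fin.prod_univ_succ]
      simp [Fin.cons_zero, Fin.cons_succ]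
    calc (∑ b : τ, ∑ A : Fin m → τ, ∏ j : Fin (m+1), F (Fin.cons (α := fun _ => τ) b A j))
        = ∑ b : τ, ∑ A : Fin m → τ, F b * ∏ j : Fin m, F (A j) := by
          exact Finset.sum_congr rfl fun b _ => Finset.sum_congr rfl fun A _ => hpt b A
      _ = (∑ b : τ, F b) * ∑ A : Fin m → τ, ∏ j : Fin m, F (A j) := by
          rw [Finset.sum_mul]
          exact Finset.sum_congr rfl fun b _ => (Finset.mul_sum _ _ _).symm
      _ = (∑ A : τ, F A) ^ (m+1) := by rw [ih, pow_succ]; ring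

def pairEquivSum (δ ε : Type) : ((δ → Bool) × (ε → Bool)) ≃ (δ ⊕ ε → Bool) where
  toFun p := Sum.elim p.1 p.2
  invFun σ := (fun d => σ (Sum.inl d), fun e => σ (Sum.inr e))
  left_inv p := rfl
  right_inv σ := by funext u; rcases u with d | e <;> rfl

lemma sum_sum_fn {δ ε : Type} [Fintype δ] [Fintype ε] [DecidableEq δ] [DecidableEq ε] (F : (δ ⊕ ε → Bool) → ℤ) :
    ∑ σ : δ ⊕ ε → Bool, F σ = ∑ u : δ → Bool, ∑ v : ε → Bool, F (Sum.elim u v) := by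
  calc ∑ σ : δ ⊕ ε → Bool, F σ
      = ∑ p : (δ → Bool) × (ε → Bool), F (Sum.elim p.1 p.2) :=
        (Fintype.sum_equiv (pairEquivSum δ ε) (fun p => F (Sum.elim p.1 p.2)) F fun p => rfl).symm
    _ = ∑ u : δ → Bool, ∑ v : ε → Bool, F (Sum.elim u v) := Fintype.sum_prod_type _

def curryEquiv (m k : ℕ) : (Fin m → Fin k → Bool) ≃ (Fin m × Fin k → Bool) where
  toFun G := fun q => G q.1 q.2
  invFun g := fun j s => g (j, s)
  left_inv _ := rfl
  right_inv _ := rfl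

/-! ### rewriting indepSum as a sum over Bool-valued functions -/

def boolFinsetEquiv {V : Type} [Fintype V] [DecidableEq V] : (V → Bool) ≃ Finset V where
  toFun σ := Finset.univ.filter (fun v => σ v = true)
  invFun S := fun v => decide (v ∈ S)
  left_inv σ := by funext v; simp
  right_inv S := by ext v; simp

lemma prod_sgn {V : Type} [Fintype V] [DecidableEq V] (σ : V → Bool) :
    (∏ v, sgn (σ v)) = (-1 : ℤ) ^ (Finset.univ.filter (fun v => σ v = true)).card := by
  have : ∀ v, sgn (σ v) = if σ v = true then (-1:ℤ) else 1 := by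
    intro v; cases σ v <;> simp [sgn]
  simp_rw [this]
  rw [Finset.prod_ite, Finset.prod_const, Finset.prod_const_one, mul_one]

set_option maxHeartbeats 1000000 in
lemma indepSum_eq {V : Type} [Fintype V] [DecidableEq V] (G : SimpleGraph V) :
    indepSum G = ∑ σ : V → Bool,
      χ (∀ u v : V, σ u = true → σ v = true → ¬ G.Adj u v) * ∏ v, sgn (σ v) := by
  rw [indepSum, Finset.sum_filter]
  refine (Fintype.sum_equiv boolFinsetEquiv _ _ ?_).symm
  intro σ
  simp only [boolFinsetEquiv, Equiv.coe_fn_mk]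
  rw [← prod_sgn]
  have hiff : (∀ x ∈ Finset.univ.filter (fun v => σ v = true),
      ∀ y ∈ Finset.univ.filter (fun v => σ v = true), ¬ G.Adj x y) ↔
      (∀ u v : V, σ u = true → σ v = true → ¬ G.Adj u v) := by
    simp only [Finset.mem_filter, Finset.mem_univ, true_and]
    constructor
    · intro H u v hu hv; exact H u hu v hv
    · intro H u hu v hv; exact H u v hu hv
  by_cases hc : ∀ u v : V, σ u = true → σ v = true → ¬ G.Adj u v
  · rw [χ_pos hc, one_mul]; exact (if_pos (hiff.2 hc)).symm
  · rw [χ_neg hc, zero_mul]; exact (if_neg (fun h => hc (hiff.1 h))).symm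

/-! ### the adjacency characterisation -/

section IndIff
variable {m n : ℕ}

lemma no_rel (m n : ℕ) (f : Fin 2 → Bool) (g : Fin m × Fin (n+1) → Bool) (h : Fin n → Bool)
    (H : ∀ j : Fin m, colOK (f 0) (f 1) h (fun s => g (j, s)))
    (u v : Fin 2 ⊕ (Fin m × Fin (n + 1) ⊕ Fin n))
    (hu : Sum.elim f (Sum.elim g h) u = true) (hv : Sum.elim f (Sum.elim g h) v = true) :
    ¬ deltaRel m n u v := by
  intro hrel
  rcases u with i | ⟨⟨j, s⟩ | t⟩ <;> rcases v with i' | ⟨⟨j', s'⟩ | t'⟩ <;>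
    simp only [deltaRel, Sum.elim_inl, Sum.elim_inr] at hrel hu hv
  · rcases hrel with ⟨hi, hs⟩ | ⟨hi, hs⟩
    · subst hi
      have hs0 : s' = 0 := Fin.ext (by simpa using hs)
      subst hs0
      have := (H j').1 hu
      simp [hv] at this
    · subst hi
      have hs0 : s' = Fin.last n := Fin.ext (by simpa using hs)
      subst hs0
      have := (H j').2.1 hu
      simp [hv] at this
  · obtain ⟨hj, hs⟩ := hrel
    subst hj
    have hlt : (s : ℕ) < n := by have := s'.isLt; omega
    have h1 : s = (⟨(s : ℕ), hlt⟩ : Fin n).castSucc := Fin.ext (by simp)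
    have h2 : s' = (⟨(s : ℕ), hlt⟩ : Fin n).succ := Fin.ext (by simp [hs])
    exact (H j).2.2.1 ⟨(s : ℕ), hlt⟩ ⟨by rw [← h1]; exact hu, by rw [← h2]; exact hv⟩
  · rcases hrel with hs | hs
    · have h1 : s' = t.castSucc := Fin.ext (by simpa using hs)
      have := ((H j').2.2.2 t hu).1
      rw [← h1] at this
      simp [hv] at this
    · have h1 : s' = t.succ := Fin.ext (by simpa using hs)
      have := ((H j').2.2.2 t hu).2
      rw [← h1] at this
      simp [hv] at this

lemma adj_of_rel {u v} (hne : u ≠ v) (hr : deltaRel m n u v) : (deltaGraph m n).Adj u v :=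
  (SimpleGraph.fromRel_adj _ _ _).2 ⟨hne, Or.inl hr⟩

lemma ind_iff (m n : ℕ) (f : Fin 2 → Bool) (g : Fin m × Fin (n+1) → Bool) (h : Fin n → Bool) :
    (∀ u v, Sum.elim f (Sum.elim g h) u = true → Sum.elim f (Sum.elim g h) v = true →
        ¬ (deltaGraph m n).Adj u v) ↔
      ∀ j : Fin m, colOK (f 0) (f 1) h (fun s => g (j, s)) := by
  constructor
  · intro H j
    refine ⟨?_, ?_, ?_, ?_⟩
    · intro hx
      by_contra hA
      rw [Bool.not_eq_false] at hA
      exact H (Sum.inl 0) (Sum.inr (Sum.inl (j, 0))) (by simpa using hx) (by simpa using hA)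
        (adj_of_rel (by simp) (Or.inl ⟨rfl, rfl⟩))
    · intro hy
      by_contra hA
      rw [Bool.not_eq_false] at hA
      exact H (Sum.inl 1) (Sum.inr (Sum.inl (j, Fin.last n))) (by simpa using hy)
        (by simpa using hA)
        (adj_of_rel (by simp) (Or.inr ⟨rfl, Fin.val_last n⟩))
    · rintro i ⟨h1, h2⟩
      exact H (Sum.inr (Sum.inl (j, i.castSucc))) (Sum.inr (Sum.inl (j, i.succ)))
        (by simpa using h1) (by simpa using h2)
        (adj_of_rel (by simp [Fin.ext_iff]) ⟨rfl, by simp⟩)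
    · intro i hi
      constructor
      · by_contra hA
        rw [Bool.not_eq_false] at hA
        exact H (Sum.inr (Sum.inr i)) (Sum.inr (Sum.inl (j, i.castSucc)))
          (by simpa using hi) (by simpa using hA)
          (adj_of_rel (by simp) (Or.inl (by simp)))
      · by_contra hA
        rw [Bool.not_eq_false] at hA
        exact H (Sum.inr (Sum.inr i)) (Sum.inr (Sum.inl (j, i.succ)))
          (by simpa using hi) (by simpa using hA)
          (adj_of_rel (by simp) (Or.inr (by simp)))
  · intro H u v hu hv hadj
    rw [deltaGraph, SimpleGraph.fromRel_adj] at hadj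
    rcases hadj with ⟨hne, hr | hr⟩
    · exact no_rel m n f g h H u v hu hv hr
    · exact no_rel m n f g h H v u hv hu hr

end IndIff

/-! ### the column power identity -/

lemma colPow (m n : ℕ) (x y : Bool) (h : Fin n → Bool) :
    (∑ g : Fin m × Fin (n+1) → Bool,
        χ (∀ j, colOK x y h (fun s => g (j, s))) * ∏ q : Fin m × Fin (n+1), sgn (g q))
      = (colSum x y h) ^ m := by
  calc (∑ g : Fin m × Fin (n+1) → Bool,
          χ (∀ j, colOK x y h (fun s => g (j, s))) * ∏ q : Fin m × Fin (n+1), sgn (g q))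
      = ∑ G : Fin m → Fin (n+1) → Bool,
          χ (∀ j, colOK x y h (G j)) * ∏ q : Fin m × Fin (n+1), sgn (G q.1 q.2) :=
        (Fintype.sum_equiv (curryEquiv m (n+1))
          (fun G => χ (∀ j, colOK x y h (G j)) * ∏ q : Fin m × Fin (n+1), sgn (G q.1 q.2))
          (fun g => χ (∀ j, colOK x y h (fun s => g (j, s))) * ∏ q : Fin m × Fin (n+1), sgn (g q))
          fun G => rfl).symm
    _ = ∑ G : Fin m → Fin (n+1) → Bool,
          ∏ j, (χ (colOK x y h (G j)) * ∏ s, sgn (G j s)) := by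
        refine Finset.sum_congr rfl fun G _ => ?_
        rw [χ_prod, Fintype.prod_prod_type]
    _ = (∑ A : Fin (n+1) → Bool, χ (colOK x y h A) * ∏ s, sgn (A s)) ^ m :=
        sum_pow_fn (fun A => χ (colOK x y h A) * ∏ s, sgn (A s)) m
    _ = (colSum x y h) ^ m := rfl

/-! ### the main factorisation -/

lemma step3 (m n : ℕ) :
    indepSum (deltaGraph m n) =
      ∑ x : Bool, ∑ y : Bool, ∑ h : Fin n → Bool,
        (sgn x * sgn y * wt h) * (colSum x y h) ^ m := by
  rw [indepSum_eq]
  rw [sum_sum_fn (fun σ => χ (∀ u v, σ u = true → σ v = true → ¬ (deltaGraph m n).Adj u v)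
    * ∏ v, sgn (σ v))]
  have inner : ∀ f : Fin 2 → Bool,
      (∑ τ : (Fin m × Fin (n+1) ⊕ Fin n) → Bool,
        χ (∀ u v, Sum.elim f τ u = true → Sum.elim f τ v = true → ¬ (deltaGraph m n).Adj u v)
          * ∏ v, sgn (Sum.elim f τ v))
      = ∑ h : Fin n → Bool, (sgn (f 0) * sgn (f 1) * wt h) * (colSum (f 0) (f 1) h) ^ m := by
    intro f
    rw [sum_sum_fn (fun τ => χ (∀ u v, Sum.elim f τ u = true → Sum.elim f τ v = true →
      ¬ (deltaGraph m n).Adj u v) * ∏ v, sgn (Sum.elim f τ v))]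
    rw [Finset.sum_comm]
    refine Finset.sum_congr rfl fun h _ => ?_
    have pointwise : ∀ g : Fin m × Fin (n+1) → Bool,
        χ (∀ u v, Sum.elim f (Sum.elim g h) u = true → Sum.elim f (Sum.elim g h) v = true →
            ¬ (deltaGraph m n).Adj u v) * ∏ v, sgn (Sum.elim f (Sum.elim g h) v)
        = (sgn (f 0) * sgn (f 1) * wt h) *
            (χ (∀ j, colOK (f 0) (f 1) h (fun s => g (j, s)))
              * ∏ q : Fin m × Fin (n+1), sgn (g q)) := by
      intro g
      rw [χ_congr (ind_iff m n f g h)]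
      rw [Fintype.prod_sum_type]
      have h2 : (∏ v : Fin m × Fin (n+1) ⊕ Fin n, sgn (Sum.elim f (Sum.elim g h) (Sum.inr v)))
          = (∏ q : Fin m × Fin (n+1), sgn (g q)) * ∏ t, sgn (h t) := by
        rw [Fintype.prod_sum_type]; rfl
      rw [h2]
      have h3 : (∏ i : Fin 2, sgn (Sum.elim f (Sum.elim g h) (Sum.inl i)))
          = sgn (f 0) * sgn (f 1) := by
        rw [Fin.prod_univ_two]; rfl
      rw [h3]
      show _ * (_ * (_ * wt h)) = _
      ring
    rw [Finset.sum_congr rfl fun g _ => pointwise g, ← Finset.mul_sum, colPow]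
  rw [Finset.sum_congr rfl fun f _ => inner f]
  calc (∑ f : Fin 2 → Bool, ∑ h : Fin n → Bool,
          (sgn (f 0) * sgn (f 1) * wt h) * (colSum (f 0) (f 1) h) ^ m)
      = ∑ p : Bool × Bool, ∑ h : Fin n → Bool,
          (sgn p.1 * sgn p.2 * wt h) * (colSum p.1 p.2 h) ^ m := by
        refine Fintype.sum_equiv (piFinTwoEquiv fun _ => Bool)
          (fun f => ∑ h : Fin n → Bool, (sgn (f 0) * sgn (f 1) * wt h) * (colSum (f 0) (f 1) h) ^ m)
          (fun p => ∑ h : Fin n → Bool, (sgn p.1 * sgn p.2 * wt h) * (colSum p.1 p.2 h) ^ m)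
          fun f => rfl
    _ = _ := Fintype.sum_prod_type _

/-! ### colSum = pcol -/

lemma χ_and (P Q : Prop) : χ (P ∧ Q) = χ P * χ Q := by
  by_cases hP : P
  · by_cases hQ : Q
    · rw [χ_pos ⟨hP, hQ⟩, χ_pos hP, χ_pos hQ]; ring
    · rw [χ_neg (fun h => hQ h.2), χ_neg hQ]; ring
  · rw [χ_neg (fun h => hP h.1), χ_neg hP]; ring

lemma wt_cons {k : ℕ} (b : Bool) (h : Fin k → Bool) :
    wt (Fin.cons (α := fun _ => Bool) b h) = sgn b * wt h := by
  rw [wt, Fin.prod_univ_succ]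
  simp only [Fin.cons_zero, Fin.cons_succ]
  rfl

lemma ofFn_cons {k : ℕ} (b : Bool) (h : Fin k → Bool) :
    List.ofFn (Fin.cons (α := fun _ => Bool) b h) = b :: List.ofFn h := by
  rw [List.ofFn_succ]
  simp only [Fin.cons_zero, Fin.cons_succ]

lemma colOK_cons {k : ℕ} (x y : Bool) (h : Fin (k+1) → Bool) (b : Bool) (A : Fin (k+1) → Bool) :
    colOK x y h (Fin.cons (α := fun _ => Bool) b A) ↔
      (colOK (b || h 0) y (Fin.tail h) A ∧ (b = true → x = false ∧ h 0 = false)) := by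
  simp only [colOK, Fin.forall_fin_succ, Fin.cons_zero, Fin.castSucc_zero, Fin.cons_succ,
    ← Fin.succ_castSucc, ← Fin.succ_last, Fin.tail]
  constructor
  · rintro ⟨h1, h2, ⟨h30, h3⟩, ⟨h40, h4⟩⟩
    refine ⟨⟨?_, h2, h3, h4⟩, ?_⟩
    · intro hor
      rcases Bool.or_eq_true_iff.1 hor with hb | hh
      · subst hb
        by_contra hA
        rw [Bool.not_eq_false] at hA
        exact h30 ⟨rfl, hA⟩
      · exact (h40 hh).2
    · intro hb
      subst hb
      constructor
      · cases hx : x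
        · rfl
        · exact absurd (h1 hx) (by simp)
      · cases hh : h 0
        · rfl
        · exact absurd (h40 hh).1 (by simp)
  · rintro ⟨⟨h1, h2, h3, h4⟩, hextra⟩
    refine ⟨?_, h2, ⟨?_, h3⟩, ⟨?_, h4⟩⟩
    · intro hx
      cases hb : b
      · rfl
      · exact absurd ((hextra hb).1.symm.trans hx) (by simp)
    · rintro ⟨hb, hA⟩
      rw [h1 (by simp [hb])] at hA
      exact absurd hA (by simp)
    · intro hh
      cases hb : b
      · exact ⟨rfl, h1 (by simp [hh])⟩
      · exact absurd (hextra hb).2 (by simp [hh])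

lemma colSum_eq_pcol : ∀ {k : ℕ} (x y : Bool) (h : Fin k → Bool),
    colSum x y h = pcol x y (List.ofFn h) := by
  intro k
  induction k with
  | zero =>
    intro x y h
    rw [colSum, sum_succ_fn' (fun A => χ (colOK x y h A) * ∏ s, sgn (A s))]
    rw [Fintype.sum_bool]
    have hz : ∀ (b : Bool) (A : Fin 0 → Bool),
        χ (colOK x y h (Fin.cons (α := fun _ => Bool) b A)) * (∏ s, sgn (Fin.cons (α := fun _ => Bool) b A s))
        = χ ((x = true → b = false) ∧ (y = true → b = false)) * sgn b := by
      intro b A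
      have h1 : χ (colOK x y h (Fin.cons (α := fun _ => Bool) b A))
          = χ ((x = true → b = false) ∧ (y = true → b = false)) := by
        refine χ_congr ?_
        simp [colOK, Fin.last, Fin.cons_zero]
      rw [h1, Fin.prod_univ_succ]
      simp [Fin.cons_zero]
    simp only [hz]
    rw [Finset.sum_const, Finset.sum_const]
    have hcard : (Finset.univ : Finset (Fin 0 → Bool)).card = 1 := by
      simp
    rw [hcard]
    have hofn : List.ofFn h = [] := List.ofFn_zero
    rw [hofn]
    cases x <;> cases y <;> simp [χ, pcol, sgn]
  | succ k ih =>
    intro x y h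
    rw [colSum, sum_succ_fn' (fun A => χ (colOK x y h A) * ∏ s, sgn (A s))]
    rw [Fintype.sum_bool]
    have hsgn : ∀ (b : Bool) (A : Fin (k+1) → Bool),
        (∏ s, sgn (Fin.cons (α := fun _ => Bool) b A s)) = sgn b * ∏ s, sgn (A s) := by
      intro b A
      rw [Fin.prod_univ_succ]
      simp only [Fin.cons_zero, Fin.cons_succ]
    have htrue : (∑ A : Fin (k+1) → Bool,
        χ (colOK x y h (Fin.cons (α := fun _ => Bool) true A)) * ∏ s, sgn (Fin.cons (α := fun _ => Bool) true A s))
        = cond (x || h 0) 0 (- pcol true y (List.ofFn (Fin.tail h))) := by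
      have key : ∀ A : Fin (k+1) → Bool,
          χ (colOK x y h (Fin.cons (α := fun _ => Bool) true A))
            = χ (x = false ∧ h 0 = false) * χ (colOK true y (Fin.tail h) A) := by
        intro A
        rw [χ_congr (colOK_cons x y h true A), χ_and]
        have e1 : χ (true = true → x = false ∧ h 0 = false) = χ (x = false ∧ h 0 = false) :=
          χ_congr (by simp)
        have e2 : χ (colOK (true || h 0) y (Fin.tail h) A) = χ (colOK true y (Fin.tail h) A) := by
          rw [Bool.true_or]
        rw [e1, e2, mul_comm]
      have step : (∑ A : Fin (k+1) → Bool,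
          χ (colOK x y h (Fin.cons (α := fun _ => Bool) true A)) * ∏ s, sgn (Fin.cons (α := fun _ => Bool) true A s))
          = χ (x = false ∧ h 0 = false) * (-1) * colSum true y (Fin.tail h) := by
        rw [colSum, Finset.mul_sum]
        refine Finset.sum_congr rfl fun A _ => ?_
        rw [key A, hsgn]
        have : sgn true = -1 := rfl
        rw [this]
        ring
      rw [step, ih]
      cases hx : x <;> cases hh : h 0 <;> simp [χ, hx, hh]

    have hfalse : (∑ A : Fin (k+1) → Bool,
        χ (colOK x y h (Fin.cons (α := fun _ => Bool) false A)) * ∏ s, sgn (Fin.cons (α := fun _ => Bool) false A s))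
        = pcol (h 0) y (List.ofFn (Fin.tail h)) := by
      have key : ∀ A : Fin (k+1) → Bool,
          χ (colOK x y h (Fin.cons (α := fun _ => Bool) false A))
            = χ (colOK (h 0) y (Fin.tail h) A) := by
        intro A
        rw [χ_congr (colOK_cons x y h false A)]
        have e1 : (colOK (false || h 0) y (Fin.tail h) A ∧ (false = true → x = false ∧ h 0 = false))
            ↔ colOK (h 0) y (Fin.tail h) A := by
          rw [Bool.false_or]
          simp
        exact χ_congr e1
      have step : (∑ A : Fin (k+1) → Bool,
          χ (colOK x y h (Fin.cons (α := fun _ => Bool) false A)) * ∏ s, sgn (Fin.cons (α := fun _ => Bool) false A s))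
          = colSum (h 0) y (Fin.tail h) := by
        rw [colSum]
        refine Finset.sum_congr rfl fun A _ => ?_
        rw [key A, hsgn]
        have : sgn false = 1 := rfl
        rw [this, one_mul]
      rw [step, ih]

    rw [htrue, hfalse]
    have hofn : List.ofFn h = h 0 :: List.ofFn (Fin.tail h) := by
      rw [List.ofFn_succ]; rfl
    rw [hofn, pcol]
    ring

/-! ### the invariant: pcol takes values in {-1,0,1} -/

def PairOK (u v : ℤ) : Prop :=
  (u = 0 ∧ v = 1) ∨ (u = 1 ∧ v = 1) ∨ (u = -1 ∧ v = 0) ∨ (u = -1 ∧ v = -1) ∨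
  (u = 0 ∧ v = -1) ∨ (u = 1 ∧ v = 0) ∨ (u = 0 ∧ v = 0)

lemma pcol_pair (y : Bool) : ∀ l : List Bool, PairOK (pcol false y l) (pcol true y l) := by
  intro l
  induction l with
  | nil => cases y <;> norm_num [pcol, PairOK]
  | cons c cs ih =>
    rcases ih with ⟨h1, h2⟩ | ⟨h1, h2⟩ | ⟨h1, h2⟩ | ⟨h1, h2⟩ | ⟨h1, h2⟩ | ⟨h1, h2⟩ | ⟨h1, h2⟩ <;>
      cases c <;> norm_num [pcol, PairOK, h1, h2]

lemma pcol_mem (x y : Bool) (l : List Bool) :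
    pcol x y l = -1 ∨ pcol x y l = 0 ∨ pcol x y l = 1 := by
  have := pcol_pair y l
  rcases this with ⟨h1, h2⟩ | ⟨h1, h2⟩ | ⟨h1, h2⟩ | ⟨h1, h2⟩ | ⟨h1, h2⟩ | ⟨h1, h2⟩ | ⟨h1, h2⟩ <;>
    cases x <;> simp [h1, h2]

lemma pow_eq_sq {m : ℕ} (hm : 2 ≤ m) (hme : Even m) {v : ℤ}
    (hv : v = -1 ∨ v = 0 ∨ v = 1) : v ^ m = v ^ 2 := by
  rcases hv with h | h | h <;> subst h
  · rw [hme.neg_one_pow]; norm_num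
  · rw [zero_pow (by omega : m ≠ 0), zero_pow (by norm_num : (2:ℕ) ≠ 0)]
  · simp

/-! ### the transfer recursion -/

noncomputable def pairSum (n : ℕ) (a b : Bool) : ℤ :=
  ∑ y : Bool, ∑ h : Fin n → Bool,
    (sgn y * wt h) * (pcol a y (List.ofFn h) * pcol b y (List.ofFn h))

def Ht : ℕ → ℤ × ℤ × ℤ
  | 0 => (-1, -1, 0)
  | n+1 => ((Ht n).1 - 2*(Ht n).2.1, (Ht n).1 - (Ht n).2.1 - (Ht n).2.2, (Ht n).1 - (Ht n).2.2)

lemma cond_zero_neg (a : Bool) (z : ℤ) : cond a 0 (-z) = cond a 0 1 * (-z) := by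
  cases a <;> simp

lemma pairSum_succ (n : ℕ) (a b : Bool) :
    pairSum (n+1) a b
      = pairSum n false false - (cond a 0 1 + cond b 0 1) * pairSum n false true
        + (cond a 0 1 * cond b 0 1 - 1) * pairSum n true true := by
  have expand : ∀ y : Bool,
      (∑ h : Fin (n+1) → Bool, (sgn y * wt h) * (pcol a y (List.ofFn h) * pcol b y (List.ofFn h)))
      = ∑ h : Fin n → Bool,
          ((sgn y * (sgn true * wt h)) *
              (pcol a y (true :: List.ofFn h) * pcol b y (true :: List.ofFn h))
            + (sgn y * (sgn false * wt h)) *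
              (pcol a y (false :: List.ofFn h) * pcol b y (false :: List.ofFn h))) := by
    intro y
    rw [sum_succ_fn' (fun h => (sgn y * wt h) * (pcol a y (List.ofFn h) * pcol b y (List.ofFn h)))]
    rw [Fintype.sum_bool, ← Finset.sum_add_distrib]
    refine Finset.sum_congr rfl fun h _ => ?_
    rw [wt_cons, wt_cons, ofFn_cons, ofFn_cons]
  unfold pairSum
  simp only [expand]
  simp only [Finset.mul_sum]
  simp only [← Finset.sum_sub_distrib, ← Finset.sum_add_distrib]
  refine Finset.sum_congr rfl fun y _ => Finset.sum_congr rfl fun h _ => ?_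
  have ea : ∀ c : Bool, pcol c y (true :: List.ofFn h) = pcol true y (List.ofFn h) := by
    intro c
    show pcol true y _ + cond (c || true) 0 _ = _
    simp
  have eb : ∀ c : Bool, pcol c y (false :: List.ofFn h)
      = pcol false y (List.ofFn h) + cond c 0 1 * (- pcol true y (List.ofFn h)) := by
    intro c
    show pcol false y _ + cond (c || false) 0 (-pcol true y _) = _
    rw [Bool.or_false, cond_zero_neg]
  rw [ea a, ea b, eb a, eb b]
  have st : sgn true = -1 := rfl
  have sf : sgn false = 1 := rfl
  rw [st, sf]
  ring

lemma pairSum_zero (a b : Bool) :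
    pairSum 0 a b = (cond a 1 0) * (cond b 1 0) - 1 := by
  unfold pairSum
  rw [Fintype.sum_bool]
  have huniq : ∀ y : Bool, (∑ h : Fin 0 → Bool,
      (sgn y * wt h) * (pcol a y (List.ofFn h) * pcol b y (List.ofFn h)))
      = sgn y * (pcol a y [] * pcol b y []) := by
    intro y
    have hpt : ∀ h : Fin 0 → Bool,
        (sgn y * wt h) * (pcol a y (List.ofFn h) * pcol b y (List.ofFn h))
        = sgn y * (pcol a y [] * pcol b y []) := by
      intro h
      rw [List.ofFn_zero]
      have hw : wt h = 1 := by rw [wt]; simp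
      rw [hw]
      ring
    rw [Finset.sum_congr rfl fun h _ => hpt h, Finset.sum_const]
    have hcard : (Finset.univ : Finset (Fin 0 → Bool)).card = 1 := by simp
    rw [hcard, one_smul]
  rw [huniq, huniq]
  have h1 : ∀ c : Bool, pcol c false [] = cond c 1 0 := by intro c; cases c <;> rfl
  have h2 : ∀ c : Bool, pcol c true [] = 1 := by intro c; cases c <;> rfl
  rw [h1, h1, h2, h2]
  have st : sgn true = -1 := rfl
  have sf : sgn false = 1 := rfl
  rw [st, sf]
  ring

lemma pairSum_eq : ∀ (n : ℕ),
    pairSum n false false = (Ht n).1 ∧ pairSum n false true = (Ht n).2.1 ∧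
      pairSum n true true = (Ht n).2.2 := by
  intro n
  induction n with
  | zero =>
    refine ⟨?_, ?_, ?_⟩ <;> rw [pairSum_zero] <;> norm_num [Ht]
  | succ n ih =>
    obtain ⟨i1, i2, i3⟩ := ih
    refine ⟨?_, ?_, ?_⟩ <;> rw [pairSum_succ, i1, i2, i3] <;> simp [Ht] <;> ring

/-! ### the master identity -/

lemma master (m n : ℕ) (hm : 2 ≤ m) (hme : Even m) :
    indepSum (deltaGraph m n) = (Ht n).1 - (Ht n).2.2 := by
  rw [step3]
  have point : ∀ (x y : Bool) (h : Fin n → Bool),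
      (sgn x * sgn y * wt h) * (colSum x y h) ^ m
      = sgn x * ((sgn y * wt h) * (pcol x y (List.ofFn h) * pcol x y (List.ofFn h))) := by
    intro x y h
    rw [colSum_eq_pcol, pow_eq_sq hm hme (pcol_mem x y _)]
    ring
  calc (∑ x : Bool, ∑ y : Bool, ∑ h : Fin n → Bool,
          (sgn x * sgn y * wt h) * (colSum x y h) ^ m)
      = ∑ x : Bool, sgn x * pairSum n x x := by
        refine Finset.sum_congr rfl fun x _ => ?_
        rw [pairSum, Finset.mul_sum]
        refine Finset.sum_congr rfl fun y _ => ?_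
        rw [Finset.mul_sum]
        exact Finset.sum_congr rfl fun h _ => point x y h
    _ = pairSum n false false - pairSum n true true := by
        rw [Fintype.sum_bool]
        have st : sgn true = -1 := rfl
        have sf : sgn false = 1 := rfl
        rw [st, sf]
        ring
    _ = (Ht n).1 - (Ht n).2.2 := by
        rw [(pairSum_eq n).1, (pairSum_eq n).2.2]

lemma Ht_rec (k : ℕ) :
    ((Ht (k+3)).1 - (Ht (k+3)).2.2)
      = ((Ht k).1 - (Ht k).2.2) - ((Ht (k+1)).1 - (Ht (k+1)).2.2)
        - ((Ht (k+2)).1 - (Ht (k+2)).2.2) := by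
  show ((Ht (k+2+1)).1 - (Ht (k+2+1)).2.2) = _
  simp only [Ht]
  ring

end Scratch

theorem stmt_16 (m : ℕ) (hm : 2 ≤ m) (hme : Even m) :
    indepSum (deltaGraph m 0) = -1 ∧
    indepSum (deltaGraph m 1) = 2 ∧
    indepSum (deltaGraph m 2) = -1 ∧
    ∀ n : ℕ, 3 ≤ n →
      indepSum (deltaGraph m n) =
        indepSum (deltaGraph m (n - 3)) - indepSum (deltaGraph m (n - 2)) -
          indepSum (deltaGraph m (n - 1)) := by
  refine ⟨?_, ?_, ?_, ?_⟩
  · rw [Scratch.master m 0 hm hme]; norm_num [Scratch.Ht]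
  · rw [Scratch.master m 1 hm hme]; norm_num [Scratch.Ht]
  · rw [Scratch.master m 2 hm hme]; norm_num [Scratch.Ht]
  · intro n hn
    obtain ⟨k, rfl⟩ : ∃ k, n = k + 3 := ⟨n - 3, by omega⟩
    rw [show k + 3 - 3 = k from by omega, show k + 3 - 2 = k + 1 from by omega,
      show k + 3 - 1 = k + 2 from by omega]
    rw [Scratch.master m (k+3) hm hme, Scratch.master m k hm hme,
      Scratch.master m (k+1) hm hme, Scratch.master m (k+2) hm hme]
    exact Scratch.Ht_rec k
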